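/- arXiv:1901.07623 — 2 statements merged into one kernel-verified Lean document; each statement's English description precedes it below -/
import Mathlib

section
/- Let S and S' be antichain covers of Fin p such that S' is a parent of S and no member of S' is a strict subset of a member of S. Then S ⊆ S' and S' = S ∪ {c} for some c that is maximal independent of S. -/
/-- `X` covers `Fin p`. -/
def Covers {p : ℕ} (X : Finset (Finset (Fin p))) : Prop :=
  ∀ i : Fin p, ∃ σ ∈ X, i ∈ σ

/-- `S` is an antichain cover of `Fin p`. -/
def AntichainCover {p : ℕ} (S : Finset (Finset (Fin p))) : Prop :=
  IsAntichain (· ⊆ ·) (S : Set (Finset (Fin p))) ∧ Covers S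

/-- `S ⪯ S'` : for every `σ ∈ S` there exists `σ' ∈ S'` with `σ' ⊆ σ`. -/
def Preceq {p : ℕ} (S S' : Finset (Finset (Fin p))) : Prop :=
  ∀ σ ∈ S, ∃ σ' ∈ S', σ' ⊆ σ

/-- `S'` is a parent of `S` in the poset of antichain covers of `Fin p` ordered by `⪯`. -/
def Parent {p : ℕ} (S S' : Finset (Finset (Fin p))) : Prop :=
  Preceq S S' ∧ S ≠ S' ∧
    ¬ ∃ S'' : Finset (Finset (Fin p)),
        AntichainCover S'' ∧ S'' ≠ S ∧ S'' ≠ S' ∧ Preceq S S'' ∧ Preceq S'' S'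

/-- `c` is independent of `S`: incomparable with every member of `S`. -/
def IndependentOf {p : ℕ} (c : Finset (Fin p)) (S : Finset (Finset (Fin p))) : Prop :=
  ∀ σ ∈ S, ¬ σ ⊆ c ∧ ¬ c ⊆ σ

/-- `c` is maximal independent of `S`. -/
def MaxIndependentOf {p : ℕ} (c : Finset (Fin p)) (S : Finset (Finset (Fin p))) : Prop :=
  IndependentOf c S ∧ ∀ d : Finset (Fin p), c ⊂ d → ¬ IndependentOf d S

section

variable {p : ℕ} {S S' : Finset (Finset (Fin p))} {c d : Finset (Fin p)}

theorem IndependentOf.notMem (hc : IndependentOf c S) : c ∉ S :=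
  fun h => (hc c h).2 subset_rfl

theorem AntichainCover.insert (hS : AntichainCover S) (hc : IndependentOf c S) :
    AntichainCover (insert c S) := by
  refine ⟨?_, fun i => ?_⟩
  · rw [Finset.coe_insert]
    exact hS.1.insert (fun b hb _ => (hc b hb).1) (fun b hb _ => (hc b hb).2)
  · obtain ⟨σ, hσ, hi⟩ := hS.2 i
    exact ⟨σ, Finset.mem_insert_of_mem hσ, hi⟩

theorem preceq_insert (S : Finset (Finset (Fin p))) (c : Finset (Fin p)) :
    Preceq S (insert c S) :=
  fun σ hσ => ⟨σ, Finset.mem_insert_of_mem hσ, subset_rfl⟩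

theorem Preceq.insert_left (hSS' : S ⊆ S') (hc : c ∈ S') (hcd : c ⊆ d) :
    Preceq (insert d S) S' := by
  intro σ hσ
  rcases Finset.mem_insert.1 hσ with rfl | hσ
  · exact ⟨c, hc, hcd⟩
  · exact ⟨σ, hSS' hσ, subset_rfl⟩

theorem subset_of_preceq_of_not_ssubset (hpre : Preceq S S')
    (hno : ¬ ∃ σ' ∈ S', ∃ σ ∈ S, σ' ⊂ σ) : S ⊆ S' := by
  intro σ hσ
  obtain ⟨σ', hσ', hσ'σ⟩ := hpre σ hσ
  obtain rfl : σ' = σ := by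
    by_contra hne
    exact hno ⟨σ', hσ', σ, hσ, hσ'σ.ssubset_of_ne hne⟩
  exact hσ'

theorem independentOf_of_mem_sdiff (hS' : IsAntichain (· ⊆ ·) (S' : Set (Finset (Fin p))))
    (hSS' : S ⊆ S') (hc : c ∈ S') (hcS : c ∉ S) : IndependentOf c S := by
  intro σ hσ
  have hσc : σ ≠ c := by rintro rfl; exact hcS hσ
  exact ⟨hS' (hSS' hσ) hc hσc, hS' hc (hSS' hσ) hσc.symm⟩

/-- Adding to `S` an independent set lying above a member of its parent `S'` gives an antichain
cover between `S` and `S'`, which by minimality of the parent must be `S'` itself. -/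
theorem Parent.insert_eq (hpar : Parent S S') (hS : AntichainCover S) (hSS' : S ⊆ S')
    (hd : IndependentOf d S) (hc : c ∈ S') (hcd : c ⊆ d) : insert d S = S' := by
  by_contra hne
  refine hpar.2.2 ⟨insert d S, hS.insert hd, ?_, hne, preceq_insert S d,
    Preceq.insert_left hSS' hc hcd⟩
  exact fun h => hd.notMem (h ▸ Finset.mem_insert_self d S)

end

theorem parent_no_strict_subset_is_rule1 (p : ℕ) (S S' : Finset (Finset (Fin p)))
    (hS : AntichainCover S) (hS' : AntichainCover S') (hpar : Parent S S')
    (hno : ¬ ∃ σ' ∈ S', ∃ σ ∈ S, σ' ⊂ σ) :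
    S ⊆ S' ∧ ∃ c : Finset (Fin p), MaxIndependentOf c S ∧ S' = insert c S := by
  have hSS' : S ⊆ S' := subset_of_preceq_of_not_ssubset hpar.1 hno
  obtain ⟨c, hc, hcS⟩ : ∃ c ∈ S', c ∉ S :=
    Finset.not_subset.1 fun h => hpar.2.1 (hSS'.antisymm h)
  have hcind : IndependentOf c S := independentOf_of_mem_sdiff hS'.1 hSS' hc hcS
  have hS'eq : S' = insert c S := (hpar.insert_eq hS hSS' hcind hc subset_rfl).symm
  refine ⟨hSS', c, ⟨hcind, fun d hcd hdind => ?_⟩, hS'eq⟩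
  have hdS' : d ∈ insert c S :=
    hS'eq ▸ hpar.insert_eq hS hSS' hdind hc hcd.subset ▸ Finset.mem_insert_self d S
  rcases Finset.mem_insert.1 hdS' with rfl | hdS
  · exact hcd.ne rfl
  · exact hdind.notMem hdS
end

section
/- Let n ≥ 2, i : Fin n, and ε : Fin n → Bool with ε i = false (negative auto-regulation). Define f* : (Fin n → Bool) → Bool by f* s = true iff s i = false and there exists k ≠ i with s k = ε k. Then the number of decreasing transitions of f* at i equals 2^(n−1) and the number of increasing transitions of f* at i equals 2^(n−1) − 1 (so the total number of transitions of f* at i is 2^n − 1). Moreover, for every f : (Fin n → Bool) → Bool consistent with ε such that f s = true implies f* s = true for all s, the number of decreasing transitions of f at i equals 2^(n−1) and the number of increasing transitions of f at i is at most 2^(n−1) − 1. -/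
/-- `f` does not depend on coordinate `i`. -/
def IndepOf {n : ℕ} (f : (Fin n → Bool) → Bool) (i : Fin n) : Prop :=
  ∀ (s : Fin n → Bool) (b : Bool), f (Function.update s i b) = f s

/-- Coordinate `i` is essential for `f`. -/
def EssentialCoord {n : ℕ} (f : (Fin n → Bool) → Bool) (i : Fin n) : Prop :=
  ∃ s : Fin n → Bool, f (Function.update s i false) ≠ f (Function.update s i true)

/-- `f` is positive in coordinate `i`. -/
def PosIn {n : ℕ} (f : (Fin n → Bool) → Bool) (i : Fin n) : Prop :=
  ∀ s : Fin n → Bool,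
    f (Function.update s i false) = true → f (Function.update s i true) = true

/-- `f` is negative in coordinate `i`. -/
def NegIn {n : ℕ} (f : (Fin n → Bool) → Bool) (i : Fin n) : Prop :=
  ∀ s : Fin n → Bool,
    f (Function.update s i true) = true → f (Function.update s i false) = true

/-- `f` is consistent with the sign vector `ε`: it is nondegenerate and each
coordinate acts with its prescribed sign. -/
def ConsistentWith {n : ℕ} (ε : Fin n → Bool) (f : (Fin n → Bool) → Bool) : Prop :=
  (∀ i : Fin n, EssentialCoord f i) ∧
  ∀ i : Fin n, (ε i = true → PosIn f i) ∧ (ε i = false → NegIn f i)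

/-- Number of transitions of `f` at coordinate `i`: states where `f s ≠ s i`. -/
noncomputable def numTrans {n : ℕ} (f : (Fin n → Bool) → Bool) (i : Fin n) : ℕ :=
  Nat.card {s : Fin n → Bool // f s ≠ s i}

/-- Number of increasing transitions of `f` at coordinate `i`. -/
noncomputable def numInc {n : ℕ} (f : (Fin n → Bool) → Bool) (i : Fin n) : ℕ :=
  Nat.card {s : Fin n → Bool // s i = false ∧ f s = true}

/-- Number of decreasing transitions of `f` at coordinate `i`. -/
noncomputable def numDec {n : ℕ} (f : (Fin n → Bool) → Bool) (i : Fin n) : ℕ :=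
  Nat.card {s : Fin n → Bool // s i = true ∧ f s = false}

/-- The maximally functional negative auto-regulation function `f*`. -/
def fstarNeg {n : ℕ} (ε : Fin n → Bool) (i : Fin n) : (Fin n → Bool) → Bool :=
  fun s => decide (s i = false ∧ ∃ k : Fin n, k ≠ i ∧ s k = ε k)

open Finset

/-!
`f*` vanishes on the half-cube `s i = true`, and on the half-cube `s i = false` it vanishes at
exactly one state, the one that agrees with `¬ ε` off `i`. Hence all `2 ^ (n - 1)` states with
`s i = true` are decreasing transitions and all but one of the `2 ^ (n - 1)` states with
`s i = false` are increasing ones. A function below `f*` also vanishes where `s i = true`, and its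
increasing transitions are among those of `f*`.
-/

lemma Fintype.card_filter_apply_eq {ι α : Type*} [Fintype ι] [DecidableEq ι] [Fintype α]
    [DecidableEq α] (i : ι) (a : α) :
    #{s : ι → α | s i = a} = Fintype.card α ^ (Fintype.card ι - 1) := by
  simpa only [Fintype.piFinset_univ, card_univ] using
    Fintype.card_filter_piFinset_const_eq_of_mem univ i (mem_univ a)

section TransitionCounts

variable {n : ℕ}

lemma natCard_subtype_apply_eq (i : Fin n) (b : Bool) :
    Nat.card {s : Fin n → Bool // s i = b} = 2 ^ (n - 1) := by
  rw [Nat.card_eq_fintype_card, Fintype.card_subtype, Fintype.card_filter_apply_eq,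
    Fintype.card_bool, Fintype.card_fin]

lemma numTrans_eq_numInc_add_numDec (f : (Fin n → Bool) → Bool) (i : Fin n) :
    numTrans f i = numInc f i + numDec f i := by
  have hsplit : ∀ s : Fin n → Bool,
      f s ≠ s i ↔ (s i = false ∧ f s = true) ∨ (s i = true ∧ f s = false) := by
    intro s
    cases s i <;> cases f s <;> simp
  have hdisj : Disjoint (fun s : Fin n → Bool => s i = false ∧ f s = true)
      (fun s => s i = true ∧ f s = false) := by
    rw [disjoint_iff_inf_le]
    rintro s ⟨⟨hs, -⟩, hs', -⟩
    simp_all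
  rw [numTrans, numInc, numDec, ← Nat.card_sum,
    Nat.card_congr ((Equiv.subtypeEquivRight hsplit).trans (subtypeOrEquiv _ _ hdisj))]

lemma numDec_eq_of_forall_apply_true {f : (Fin n → Bool) → Bool} {i : Fin n}
    (hf : ∀ s : Fin n → Bool, s i = true → f s = false) : numDec f i = 2 ^ (n - 1) := by
  rw [numDec, ← natCard_subtype_apply_eq i true]
  exact Nat.card_congr (Equiv.subtypeEquivRight fun s => ⟨And.left, fun hs => ⟨hs, hf s hs⟩⟩)

lemma numInc_mono {f g : (Fin n → Bool) → Bool} (i : Fin n)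
    (hfg : ∀ s : Fin n → Bool, f s = true → g s = true) : numInc f i ≤ numInc g i :=
  Finite.card_le_of_embedding (Subtype.impEmbedding _ _ fun s hs => ⟨hs.1, hfg s hs.2⟩)

end TransitionCounts

section FStar

variable {n : ℕ} (ε : Fin n → Bool) (i : Fin n)

/-- The unique state with `s i = false` at which `f*` vanishes. -/
def fstarNegZero : Fin n → Bool :=
  Function.update (fun k => !ε k) i false

lemma fstarNeg_eq_true_iff (s : Fin n → Bool) :
    fstarNeg ε i s = true ↔ s i = false ∧ s ≠ fstarNegZero ε i := by
  simp only [fstarNeg, decide_eq_true_iff, and_congr_right_iff]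
  intro hs
  constructor
  · rintro ⟨k, hki, hk⟩ rfl
    simp [fstarNegZero, Function.update_of_ne hki] at hk
  · intro hne
    obtain ⟨k, hk⟩ := Function.ne_iff.mp hne
    have hki : k ≠ i := by
      rintro rfl
      simp [fstarNegZero, hs] at hk
    refine ⟨k, hki, ?_⟩
    simpa [fstarNegZero, Function.update_of_ne hki] using hk

lemma fstarNeg_of_apply_true {s : Fin n → Bool} (hs : s i = true) : fstarNeg ε i s = false := by
  simp [fstarNeg, hs]

lemma numDec_fstarNeg : numDec (fstarNeg ε i) i = 2 ^ (n - 1) :=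
  numDec_eq_of_forall_apply_true fun _ => fstarNeg_of_apply_true ε i

lemma numInc_fstarNeg : numInc (fstarNeg ε i) i = 2 ^ (n - 1) - 1 := by
  have hzero : fstarNegZero ε i ∈ ({s | s i = false} : Finset (Fin n → Bool)) := by
    simp [fstarNegZero]
  simp_rw [numInc, fstarNeg_eq_true_iff, and_self_left]
  rw [Nat.card_eq_fintype_card, Fintype.card_subtype, ← filter_filter, filter_ne',
    card_erase_of_mem hzero, Fintype.card_filter_apply_eq, Fintype.card_bool, Fintype.card_fin]

lemma numTrans_fstarNeg : numTrans (fstarNeg ε i) i = 2 ^ n - 1 := by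
  obtain ⟨m, rfl⟩ : ∃ m, n = m + 1 := Nat.exists_eq_add_one.mpr i.pos
  rw [numTrans_eq_numInc_add_numDec, numInc_fstarNeg, numDec_fstarNeg, Nat.add_sub_cancel,
    pow_succ]
  have := Nat.one_le_two_pow (n := m)
  omega

end FStar

theorem fstar_negative_autoregulation_general (n : ℕ) (i : Fin n)
    (ε : Fin n → Bool) :
    numDec (fstarNeg ε i) i = 2 ^ (n - 1) ∧
    numInc (fstarNeg ε i) i = 2 ^ (n - 1) - 1 ∧
    numTrans (fstarNeg ε i) i = 2 ^ n - 1 ∧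
    ∀ f : (Fin n → Bool) → Bool, ConsistentWith ε f →
      (∀ s : Fin n → Bool, f s = true → fstarNeg ε i s = true) →
      numDec f i = 2 ^ (n - 1) ∧ numInc f i ≤ 2 ^ (n - 1) - 1 := by
  refine ⟨numDec_fstarNeg ε i, numInc_fstarNeg ε i, numTrans_fstarNeg ε i, fun f _ hf => ⟨?_, ?_⟩⟩
  · refine numDec_eq_of_forall_apply_true fun s hs => Bool.eq_false_iff.mpr fun hfs => ?_
    simpa [fstarNeg_of_apply_true ε i hs] using hf s hfs
  · exact numInc_fstarNeg ε i ▸ numInc_mono i hf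

theorem fstar_negative_autoregulation (n : ℕ) (hn : 2 ≤ n) (i : Fin n)
    (ε : Fin n → Bool) (hi : ε i = false) :
    numDec (fstarNeg ε i) i = 2 ^ (n - 1) ∧
    numInc (fstarNeg ε i) i = 2 ^ (n - 1) - 1 ∧
    numTrans (fstarNeg ε i) i = 2 ^ n - 1 ∧
    ∀ f : (Fin n → Bool) → Bool, ConsistentWith ε f →
      (∀ s : Fin n → Bool, f s = true → fstarNeg ε i s = true) →
      numDec f i = 2 ^ (n - 1) ∧ numInc f i ≤ 2 ^ (n - 1) - 1 :=
  fstar_negative_autoregulation_general n i ε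
end
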